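/- Let H be a complex Hilbert space and G a bounded selfadjoint operator with canonical decomposition H = H₊ ⊕ H₋ ⊕ N(G), G = G₊ ⊕ (−G₋) ⊕ 0, where G± are positive definite on H± with ‖G₊‖ = ‖G₋‖ = 1/κ. Then the following are equivalent: (i) for every u₀ ∈ H there exist γ ∈ [−κ, κ] and y₀ ∈ H with ⟨G y₀, y₀⟩ = 0 and (I + γG) y₀ = u₀; (ii) ker(I − κG) ≠ {0} and ker(I + κG) ≠ {0}. -/

import Mathlib

/-!
For `|γ| < κ` the operator `1 + γG` is invertible; let `y_γ` solve `(1 + γG) y_γ = u₀` and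
`f γ = ⟪G y_γ, y_γ⟫`, a continuous real function on `(-κ, κ)`. If `f` vanishes somewhere we are
done; otherwise it has a constant sign, say positive (the negative case is the same argument for
`-G`). Along solutions `f` decreases with `‖y_γ' - y_γ‖² ≤ κ (f γ - f γ')`; being positive,
`f` converges as `γ ↑ κ`, hence so do the `y_γ`, to a solution `y*` of `(1 + κG) y = u₀` with
`⟪G y*, y*⟫ ≥ 0`. A nonzero `e ∈ ker (1 + κG)` has `⟪G e, e⟫ = -‖e‖²/κ < 0`, so some
`y* + t e` is isotropic and still a solution.

Conversely, for a unit vector `u₀ ∈ H₊`, the `H₋`-component `m` of an isotropic solution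
satisfies `m + γ G m = 0`, and `m ≠ 0` since `G` is positive definite on `H₊`. As `G` is negative
definite on `H₋` and `‖G‖ ≤ 1/κ`, this forces `γ = κ`, so `m ∈ ker (1 + κG)`; symmetrically
with `H₋` and `-G`.
-/

open scoped InnerProductSpace
open Set Filter Topology

theorem cauchySeq_of_sq_dist_le_of_monotone {α : Type*} [PseudoMetricSpace α] {f : ℕ → α}
    {Q : ℕ → ℝ} (hQ : Monotone Q) (hQb : BddAbove (Set.range Q))
    (h : ∀ a b, a ≤ b → dist (f a) (f b) ^ 2 ≤ Q b - Q a) : CauchySeq f := by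
  refine Metric.cauchySeq_iff'.2 fun ε hε => ?_
  obtain ⟨N, hN⟩ := Metric.cauchySeq_iff'.1 (tendsto_atTop_ciSup hQ hQb).cauchySeq (ε ^ 2)
    (by positivity)
  refine ⟨N, fun n hn => lt_of_pow_lt_pow_left₀ 2 hε.le ?_⟩
  calc dist (f n) (f N) ^ 2 = dist (f N) (f n) ^ 2 := by rw [dist_comm]
    _ ≤ Q n - Q N := h N n hn
    _ ≤ dist (Q n) (Q N) := le_abs_self _
    _ < ε ^ 2 := hN n hn

theorem IsPreconnected.pos_of_pos_of_ne_zero {α : Type*} [TopologicalSpace α] {s : Set α}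
    (hs : IsPreconnected s) {f : α → ℝ} (hf : ContinuousOn f s) (hf0 : ∀ x ∈ s, f x ≠ 0)
    {a b : α} (ha : a ∈ s) (hb : b ∈ s) (hfa : 0 < f a) : 0 < f b := by
  by_contra! hfb
  obtain ⟨c, hc, hfc⟩ := hs.intermediate_value hb ha hf ⟨hfb, hfa.le⟩
  exact hf0 c hc hfc

section

variable {H : Type*} [NormedAddCommGroup H] [InnerProductSpace ℂ H]

theorem re_inner_add_smul_apply_self (G : H →L[ℂ] H) (x : H) (γ : ℝ) :
    (⟪x + (γ : ℂ) • G x, x⟫_ℂ).re = ‖x‖ ^ 2 + γ * (⟪G x, x⟫_ℂ).re := by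
  have hxx : (⟪x, x⟫_ℂ).re = ‖x‖ ^ 2 := by simpa using inner_self_eq_norm_sq (𝕜 := ℂ) x
  rw [inner_add_left, inner_smul_left, Complex.conj_ofReal, Complex.add_re, Complex.re_ofReal_mul,
    hxx]

variable {G : H →L[ℂ] H}

theorem norm_apply_le_of_isLUB {S : Submodule ℂ H} {c : ℝ}
    (h : IsLUB {r : ℝ | ∃ x ∈ S, ‖x‖ = 1 ∧ r = ‖G x‖} c) {x : H} (hx : x ∈ S) :
    ‖G x‖ ≤ c * ‖x‖ := by
  obtain ⟨_, y, hy, hy1, rfl⟩ := h.nonempty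
  have hc : 0 ≤ c := (norm_nonneg _).trans (h.1 ⟨y, hy, hy1, rfl⟩)
  have hGS := (G.comp S.subtypeL).opNorm_le_of_unit_norm hc fun z hz => h.1 ⟨z, z.2, hz, rfl⟩
  exact (G.comp S.subtypeL).le_of_opNorm_le hGS ⟨x, hx⟩

theorem LinearMap.IsSymmetric.inner_apply_self_eq_zero_iff (hG : (G : H →ₗ[ℂ] H).IsSymmetric)
    (x : H) : ⟪G x, x⟫_ℂ = 0 ↔ (⟪G x, x⟫_ℂ).re = 0 := by
  refine ⟨fun h => by rw [h, Complex.zero_re], fun h => Complex.ext h ?_⟩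
  simpa using hG.im_inner_apply_self x

theorem LinearMap.IsSymmetric.re_inner_apply_add_self (hG : (G : H →ₗ[ℂ] H).IsSymmetric) (x z : H) :
    (⟪G (x + z), x + z⟫_ℂ).re =
      (⟪G x, x⟫_ℂ).re + 2 * (⟪G x, z⟫_ℂ).re + (⟪G z, z⟫_ℂ).re := by
  have hzx : (⟪G z, x⟫_ℂ).re = (⟪G x, z⟫_ℂ).re := by
    rw [← ContinuousLinearMap.coe_coe G, hG z x, ← inner_conj_symm, Complex.conj_re]
  simp only [map_add, inner_add_left, inner_add_right, Complex.add_re, hzx]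
  ring

theorem LinearMap.IsSymmetric.sq_norm_sub_le_of_apply_eq (hG : (G : H →ₗ[ℂ] H).IsSymmetric) {κ : ℝ}
    (hGκ : ‖G‖ ≤ κ⁻¹) {γ γ' : ℝ} (hγ : -κ ≤ γ) (hγγ' : γ < γ') (hγ' : γ' ≤ κ) {y y' : H}
    (h : ((1 : H →L[ℂ] H) + (γ : ℂ) • G) y = ((1 : H →L[ℂ] H) + (γ' : ℂ) • G) y') :
    ‖y' - y‖ ^ 2 ≤ κ * ((⟪G y, y⟫_ℂ).re - (⟪G y', y'⟫_ℂ).re) := by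
  have hκ : 0 < κ := by linarith
  have hD : (y' - y) + (γ' : ℂ) • G (y' - y) = ((γ - γ' : ℝ) : ℂ) • G y := by
    simp only [_root_.add_apply, one_apply_eq_self, _root_.smul_apply] at h
    rw [map_sub, Complex.ofReal_sub]
    linear_combination (norm := module) -h
  set D := y' - y
  set g := (⟪G y, D⟫_ℂ).re
  set d := (⟪G D, D⟫_ℂ).re
  have h1 : ‖D‖ ^ 2 + γ' * d = (γ - γ') * g := by
    rw [← re_inner_add_smul_apply_self, hD, inner_smul_left, Complex.conj_ofReal,
      Complex.re_ofReal_mul]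
  have h2 : (⟪G y', y'⟫_ℂ).re = (⟪G y, y⟫_ℂ).re + 2 * g + d := by
    rw [← hG.re_inner_apply_add_self, add_sub_cancel]
  have h3 : |κ * d| ≤ ‖D‖ ^ 2 := by
    calc |κ * d| ≤ κ * (‖G D‖ * ‖D‖) := by
          rw [abs_mul, abs_of_pos hκ]
          gcongr
          exact (Complex.abs_re_le_norm _).trans (norm_inner_le_norm _ _)
      _ ≤ κ * (κ⁻¹ * ‖D‖ * ‖D‖) := by gcongr; exact G.le_of_opNorm_le hGκ D
      _ = ‖D‖ ^ 2 := by field_simp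
  -- `(γ' - γ)` times the gap is `(κ + γ)(‖D‖² + κ d) + (κ - γ')(‖D‖² - κ d)`, and `|κ d| ≤ ‖D‖²`
  have key : 0 ≤ (γ' - γ) * (κ * (-2 * g - d) - ‖D‖ ^ 2) := by
    have e : (γ' - γ) * (κ * (-2 * g - d) - ‖D‖ ^ 2) =
        (κ + γ) * (‖D‖ ^ 2 + κ * d) + (κ - γ') * (‖D‖ ^ 2 - κ * d) := by
      linear_combination (-2 * κ) * h1
    obtain ⟨h3l, h3r⟩ := abs_le.1 h3
    rw [e]
    exact add_nonneg (mul_nonneg (by linarith) (by linarith))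
      (mul_nonneg (by linarith) (by linarith))
  rw [h2]
  linarith [(mul_nonneg_iff_of_pos_left (sub_pos.2 hγγ')).1 key]

theorem LinearMap.IsSymmetric.exists_inner_add_smul_eq_zero (hG : (G : H →ₗ[ℂ] H).IsSymmetric)
    {y e : H} (hy : 0 ≤ (⟪G y, y⟫_ℂ).re) (he : (⟪G e, e⟫_ℂ).re < 0) :
    ∃ t : ℝ, ⟪G (y + (t : ℂ) • e), y + (t : ℂ) • e⟫_ℂ = 0 := by
  have hdisc : 0 ≤ discrim (⟪G e, e⟫_ℂ).re (2 * (⟪G y, e⟫_ℂ).re) (⟪G y, y⟫_ℂ).re := by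
    unfold discrim; nlinarith [sq_nonneg (⟪G y, e⟫_ℂ).re]
  obtain ⟨t, ht⟩ := exists_quadratic_eq_zero he.ne ⟨_, (Real.mul_self_sqrt hdisc).symm⟩
  refine ⟨t, (hG.inner_apply_self_eq_zero_iff _).2 ?_⟩
  rw [hG.re_inner_apply_add_self]
  simp only [map_smul, inner_smul_left, inner_smul_right, Complex.conj_ofReal,
    Complex.re_ofReal_mul]
  linear_combination ht

theorem LinearMap.IsSymmetric.exists_nonneg_solution_of_forall_Ioo [CompleteSpace H]
    (hG : (G : H →ₗ[ℂ] H).IsSymmetric) {κ : ℝ} (hκ : 0 < κ) (hGκ : ‖G‖ ≤ κ⁻¹) {u₀ : H}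
    (h : ∀ γ ∈ Ioo 0 κ, ∃ y, ((1 : H →L[ℂ] H) + (γ : ℂ) • G) y = u₀ ∧ 0 ≤ (⟪G y, y⟫_ℂ).re) :
    ∃ y, ((1 : H →L[ℂ] H) + (κ : ℂ) • G) y = u₀ ∧ 0 ≤ (⟪G y, y⟫_ℂ).re := by
  obtain ⟨s, hs, hs_mem, hs_lim⟩ := exists_seq_strictMono_tendsto' hκ
  choose y hy hy0 using fun k => h (s k) (hs_mem k)
  set Q : ℕ → ℝ := fun k => -(κ * (⟪G (y k), y k⟫_ℂ).re)
  have hgap : ∀ a b, a ≤ b → dist (y a) (y b) ^ 2 ≤ Q b - Q a := by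
    intro a b hab
    rcases hab.eq_or_lt with rfl | hab
    · simp
    have := hG.sq_norm_sub_le_of_apply_eq hGκ (by linarith [(hs_mem a).1]) (hs hab)
      (hs_mem b).2.le ((hy a).trans (hy b).symm)
    rw [dist_comm, dist_eq_norm]
    linarith
  have hQ : Monotone Q := fun a b hab => by linarith [hgap a b hab, sq_nonneg (dist (y a) (y b))]
  have hQb : BddAbove (Set.range Q) :=
    ⟨0, by rintro _ ⟨k, rfl⟩; exact neg_nonpos.2 (mul_nonneg hκ.le (hy0 k))⟩
  obtain ⟨y₀, hy₀⟩ :=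
    cauchySeq_tendsto_of_complete (cauchySeq_of_sq_dist_le_of_monotone hQ hQb hgap)
  have hGy₀ : Tendsto (fun k => G (y k)) atTop (𝓝 (G y₀)) := (G.continuous.tendsto y₀).comp hy₀
  have hre : Tendsto (fun k => (⟪G (y k), y k⟫_ℂ).re) atTop (𝓝 (⟪G y₀, y₀⟫_ℂ).re) :=
    (Complex.continuous_re.tendsto _).comp (hGy₀.inner hy₀)
  have hlim : Tendsto (fun k => y k + (s k : ℂ) • G (y k)) atTop (𝓝 (y₀ + (κ : ℂ) • G y₀)) :=
    hy₀.add (((Complex.continuous_ofReal.tendsto κ).comp hs_lim).smul hGy₀)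
  simp only [_root_.add_apply, one_apply_eq_self, _root_.smul_apply] at hy
  simp only [hy] at hlim
  refine ⟨y₀, ?_, ge_of_tendsto hre (Eventually.of_forall hy0)⟩
  simpa using tendsto_nhds_unique hlim tendsto_const_nhds

theorem LinearMap.IsSymmetric.exists_isotropic_solution_of_ker_ne_bot [CompleteSpace H]
    (hG : (G : H →ₗ[ℂ] H).IsSymmetric) {κ : ℝ} (hκ : 0 < κ) (hGκ : ‖G‖ ≤ κ⁻¹)
    (hker : LinearMap.ker (((1 : H →L[ℂ] H) + (κ : ℂ) • G : H →L[ℂ] H) : H →ₗ[ℂ] H) ≠ ⊥)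
    {u₀ : H}
    (h : ∀ γ ∈ Ioo 0 κ, ∃ y, ((1 : H →L[ℂ] H) + (γ : ℂ) • G) y = u₀ ∧ 0 ≤ (⟪G y, y⟫_ℂ).re) :
    ∃ y, ⟪G y, y⟫_ℂ = 0 ∧ ((1 : H →L[ℂ] H) + (κ : ℂ) • G) y = u₀ := by
  obtain ⟨y, hy, hy0⟩ := hG.exists_nonneg_solution_of_forall_Ioo hκ hGκ h
  obtain ⟨e, he, he0⟩ := (Submodule.ne_bot_iff _).1 hker
  have he' : ((1 : H →L[ℂ] H) + (κ : ℂ) • G) e = 0 := he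
  have hGe : (⟪G e, e⟫_ℂ).re < 0 := by
    have h1 := re_inner_add_smul_apply_self G e κ
    simp only [_root_.add_apply, one_apply_eq_self, _root_.smul_apply] at he'
    rw [he', inner_zero_left, Complex.zero_re] at h1
    nlinarith [norm_pos_iff.2 he0]
  obtain ⟨t, ht⟩ := hG.exists_inner_add_smul_eq_zero hy0 hGe
  exact ⟨_, ht, by rw [map_add, map_smul, he', smul_zero, add_zero, hy]⟩

theorem isUnit_one_add_smul [CompleteSpace H] {κ γ : ℝ} (hGκ : ‖G‖ ≤ κ⁻¹)
    (hγ : γ ∈ Ioo (-κ) κ) : IsUnit ((1 : H →L[ℂ] H) + (γ : ℂ) • G) := by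
  have hκ : 0 < κ := by linarith [hγ.1, hγ.2]
  have h : ‖-((γ : ℂ) • G)‖ < 1 := by
    rw [norm_neg, norm_smul, Complex.norm_real, Real.norm_eq_abs]
    calc |γ| * ‖G‖ ≤ |γ| * κ⁻¹ := by gcongr
      _ < κ * κ⁻¹ := by gcongr; exact abs_lt.2 hγ
      _ = 1 := mul_inv_cancel₀ hκ.ne'
  simpa [sub_eq_add_neg] using (Units.oneSub _ h).isUnit

theorem exists_continuousOn_solution [CompleteSpace H] {κ : ℝ} (hGκ : ‖G‖ ≤ κ⁻¹) (u₀ : H) :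
    ∃ R : ℝ → H, ContinuousOn R (Ioo (-κ) κ) ∧
      ∀ γ ∈ Ioo (-κ) κ, ((1 : H →L[ℂ] H) + (γ : ℂ) • G) (R γ) = u₀ := by
  refine ⟨fun γ => Ring.inverse ((1 : H →L[ℂ] H) + (γ : ℂ) • G) u₀, fun γ hγ => ?_,
    fun γ hγ => ?_⟩
  · obtain ⟨v, hv⟩ := isUnit_one_add_smul hGκ hγ
    have hinv : ContinuousAt Ring.inverse ((1 : H →L[ℂ] H) + (γ : ℂ) • G) :=
      hv ▸ NormedRing.inverse_continuousAt v
    have hlin : ContinuousAt (fun t : ℝ => (1 : H →L[ℂ] H) + (t : ℂ) • G) γ := by fun_prop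
    exact ((hinv.comp_of_eq hlin rfl).clm_apply continuousAt_const).continuousWithinAt
  · rw [← mul_apply_eq_comp, Ring.mul_inverse_cancel _ (isUnit_one_add_smul hGκ hγ),
      one_apply_eq_self]

theorem IsSelfAdjoint.exists_isotropic_solution [CompleteSpace H] (hG : IsSelfAdjoint G)
    {κ : ℝ} (hκ : 0 < κ) (hGκ : ‖G‖ ≤ κ⁻¹)
    (hker_sub : LinearMap.ker (((1 : H →L[ℂ] H) - (κ : ℂ) • G : H →L[ℂ] H) : H →ₗ[ℂ] H) ≠ ⊥)
    (hker_add : LinearMap.ker (((1 : H →L[ℂ] H) + (κ : ℂ) • G : H →L[ℂ] H) : H →ₗ[ℂ] H) ≠ ⊥)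
    (u₀ : H) : ∃ γ ∈ Icc (-κ) κ, ∃ y : H,
      ⟪G y, y⟫_ℂ = 0 ∧ ((1 : H →L[ℂ] H) + (γ : ℂ) • G) y = u₀ := by
  have hGs := ContinuousLinearMap.isSelfAdjoint_iff_isSymmetric.mp hG
  obtain ⟨R, hRc, hR⟩ := exists_continuousOn_solution hGκ u₀
  set f : ℝ → ℝ := fun γ => (⟪G (R γ), R γ⟫_ℂ).re
  have hf : ContinuousOn f (Ioo (-κ) κ) :=
    Complex.continuous_re.comp_continuousOn ((G.continuous.comp_continuousOn hRc).inner hRc)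
  by_cases hzero : ∃ γ ∈ Ioo (-κ) κ, f γ = 0
  · obtain ⟨γ, hγ, hfγ⟩ := hzero
    exact ⟨γ, Ioo_subset_Icc_self hγ, R γ, (hGs.inner_apply_self_eq_zero_iff _).2 hfγ, hR γ hγ⟩
  push Not at hzero
  have h0 : (0 : ℝ) ∈ Ioo (-κ) κ := ⟨by linarith, hκ⟩
  rcases (hzero 0 h0).lt_or_gt with hneg | hpos
  · have hneg' : ∀ γ ∈ Ioo (-κ) κ, f γ < 0 := fun γ hγ =>
      neg_pos.1 (isPreconnected_Ioo.pos_of_pos_of_ne_zero hf.neg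
        (fun x hx => neg_ne_zero.2 (hzero x hx)) h0 hγ (neg_pos.2 hneg))
    have hGs' := ContinuousLinearMap.isSelfAdjoint_iff_isSymmetric.mp hG.neg
    obtain ⟨y, hy0, hy⟩ := hGs'.exists_isotropic_solution_of_ker_ne_bot hκ (by rwa [norm_neg])
        (by rwa [smul_neg, ← sub_eq_add_neg])
        fun γ hγ => ⟨R (-γ), by simpa using hR (-γ) ⟨by linarith [hγ.2], by linarith [hγ.1]⟩,
          by simpa using (hneg' (-γ) ⟨by linarith [hγ.2], by linarith [hγ.1]⟩).le⟩
    exact ⟨-κ, ⟨le_rfl, by linarith⟩, y, by simpa using hy0, by simpa using hy⟩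
  · have hpos' : ∀ γ ∈ Ioo (-κ) κ, 0 < f γ := fun γ hγ =>
      isPreconnected_Ioo.pos_of_pos_of_ne_zero hf hzero h0 hγ hpos
    obtain ⟨y, hy0, hy⟩ := hGs.exists_isotropic_solution_of_ker_ne_bot hκ hGκ hker_add
      fun γ hγ => ⟨R γ, hR γ ⟨by linarith [hγ.1], hγ.2⟩, (hpos' γ ⟨by linarith [hγ.1], hγ.2⟩).le⟩
    exact ⟨κ, ⟨by linarith, le_rfl⟩, y, hy0, hy⟩

structure IsCanonicalDecomposition (G : H →L[ℂ] H) (Hp Hm : Submodule ℂ H) : Prop where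
  isOrtho : Hp ⟂ Hm
  isOrtho_ker_left : Hp ⟂ LinearMap.ker (G : H →ₗ[ℂ] H)
  isOrtho_ker_right : Hm ⟂ LinearMap.ker (G : H →ₗ[ℂ] H)
  exists_eq_add_add :
    ∀ x : H, ∃ p ∈ Hp, ∃ m ∈ Hm, ∃ n ∈ LinearMap.ker (G : H →ₗ[ℂ] H), x = p + m + n
  mapsTo_left : ∀ x ∈ Hp, G x ∈ Hp
  mapsTo_right : ∀ x ∈ Hm, G x ∈ Hm
  re_inner_pos : ∀ x ∈ Hp, x ≠ 0 → 0 < (⟪G x, x⟫_ℂ).re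
  re_inner_neg : ∀ x ∈ Hm, x ≠ 0 → (⟪G x, x⟫_ℂ).re < 0

namespace IsCanonicalDecomposition

variable {Hp Hm : Submodule ℂ H}

theorem neg (hD : IsCanonicalDecomposition G Hp Hm) : IsCanonicalDecomposition (-G) Hm Hp := by
  have hker : LinearMap.ker ((-G : H →L[ℂ] H) : H →ₗ[ℂ] H) = LinearMap.ker (G : H →ₗ[ℂ] H) := by
    ext; simp
  refine ⟨hD.isOrtho.symm, hker ▸ hD.isOrtho_ker_right, hker ▸ hD.isOrtho_ker_left,
    fun x => ?_, fun x hx => ?_, fun x hx => ?_, fun x hx hx0 => ?_, fun x hx hx0 => ?_⟩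
  · obtain ⟨p, hp, m, hm, n, hn, rfl⟩ := hD.exists_eq_add_add x
    exact ⟨m, hm, p, hp, n, hker ▸ hn, by abel⟩
  · simpa using Hm.neg_mem (hD.mapsTo_right x hx)
  · simpa using Hp.neg_mem (hD.mapsTo_left x hx)
  · simpa using hD.re_inner_neg x hx hx0
  · simpa using hD.re_inner_pos x hx hx0

theorem eq_zero_of_add_add_eq_zero (hD : IsCanonicalDecomposition G Hp Hm) {p m n : H}
    (hp : p ∈ Hp) (hm : m ∈ Hm) (hn : n ∈ LinearMap.ker (G : H →ₗ[ℂ] H)) (h : p + m + n = 0) :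
    p = 0 ∧ m = 0 ∧ n = 0 := by
  have hp0 : p = 0 := by
    have : ⟪p, p + m + n⟫_ℂ = 0 := by rw [h, inner_zero_right]
    rwa [inner_add_right, inner_add_right, hD.isOrtho.inner_eq hp hm,
      hD.isOrtho_ker_left.inner_eq hp hn, add_zero, add_zero, inner_self_eq_zero] at this
  subst hp0
  have hm0 : m = 0 := by
    have : ⟪m, 0 + m + n⟫_ℂ = 0 := by rw [h, inner_zero_right]
    rwa [zero_add, inner_add_right, hD.isOrtho_ker_right.inner_eq hm hn, add_zero,
      inner_self_eq_zero] at this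
  subst hm0
  exact ⟨rfl, rfl, by simpa using h⟩

theorem inner_apply_add_add (hD : IsCanonicalDecomposition G Hp Hm) {p m n : H}
    (hp : p ∈ Hp) (hm : m ∈ Hm) (hn : n ∈ LinearMap.ker (G : H →ₗ[ℂ] H)) :
    ⟪G (p + m + n), p + m + n⟫_ℂ = ⟪G p, p⟫_ℂ + ⟪G m, m⟫_ℂ := by
  have hGp := hD.mapsTo_left p hp
  have hGm := hD.mapsTo_right m hm
  have hGn : G n = 0 := hn
  rw [map_add, map_add, hGn, add_zero]
  simp only [inner_add_left, inner_add_right, hD.isOrtho.inner_eq hGp hm,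
    hD.isOrtho_ker_left.inner_eq hGp hn, hD.isOrtho_ker_right.inner_eq hGm hn,
    hD.isOrtho.symm.inner_eq hGm hp]
  ring

theorem opNorm_le (hD : IsCanonicalDecomposition G Hp Hm) {c : ℝ} (hc : 0 ≤ c)
    (hGp : ∀ x ∈ Hp, ‖G x‖ ≤ c * ‖x‖) (hGm : ∀ x ∈ Hm, ‖G x‖ ≤ c * ‖x‖) : ‖G‖ ≤ c := by
  refine G.opNorm_le_bound hc fun x => ?_
  obtain ⟨p, hp, m, hm, n, hn, rfl⟩ := hD.exists_eq_add_add x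
  have hx : ‖p‖ ^ 2 + ‖m‖ ^ 2 ≤ ‖p + m + n‖ ^ 2 := by
    rw [sq, sq, sq, norm_add_sq_eq_norm_sq_add_norm_sq_of_inner_eq_zero (𝕜 := ℂ),
      norm_add_sq_eq_norm_sq_add_norm_sq_of_inner_eq_zero (𝕜 := ℂ) _ _ (hD.isOrtho.inner_eq hp hm)]
    · nlinarith [mul_self_nonneg ‖n‖]
    · rw [inner_add_left, hD.isOrtho_ker_left.inner_eq hp hn,
        hD.isOrtho_ker_right.inner_eq hm hn, add_zero]
  have hGn : G n = 0 := hn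
  have hGx : ‖G (p + m + n)‖ ^ 2 = ‖G p‖ ^ 2 + ‖G m‖ ^ 2 := by
    rw [map_add, map_add, hGn, add_zero, sq, sq, sq,
      norm_add_sq_eq_norm_sq_add_norm_sq_of_inner_eq_zero (𝕜 := ℂ) _ _
        (hD.isOrtho.inner_eq (hD.mapsTo_left p hp) (hD.mapsTo_right m hm))]
  refine (pow_le_pow_iff_left₀ (norm_nonneg _) (by positivity) two_ne_zero).mp ?_
  rw [hGx, mul_pow]
  nlinarith [hGp p hp, hGm m hm, norm_nonneg (G p), norm_nonneg (G m), sq_nonneg c]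

theorem ker_one_add_smul_ne_bot (hD : IsCanonicalDecomposition G Hp Hm) {κ : ℝ} (hκ : 0 < κ)
    (hG : ‖G‖ ≤ κ⁻¹) {u₀ y : H} (hu₀ : u₀ ∈ Hp) (hu₀0 : u₀ ≠ 0) {γ : ℝ} (hγ : γ ≤ κ)
    (hQ : ⟪G y, y⟫_ℂ = 0) (hy : ((1 : H →L[ℂ] H) + (γ : ℂ) • G) y = u₀) :
    LinearMap.ker (((1 : H →L[ℂ] H) + (κ : ℂ) • G : H →L[ℂ] H) : H →ₗ[ℂ] H) ≠ ⊥ := by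
  obtain ⟨p, hp, m, hm, n, hn, rfl⟩ := hD.exists_eq_add_add y
  have hGn : G n = 0 := hn
  obtain ⟨-, hmγ, rfl⟩ := hD.eq_zero_of_add_add_eq_zero
    (Hp.sub_mem (Hp.add_mem hp (Hp.smul_mem (γ : ℂ) (hD.mapsTo_left p hp))) hu₀)
    (Hm.add_mem hm (Hm.smul_mem (γ : ℂ) (hD.mapsTo_right m hm))) hn
    (by rw [← hy]; simp only [add_apply, one_apply_eq_self, smul_apply, map_add, hGn]; module)
  rw [hD.inner_apply_add_add hp hm hn] at hQ
  have hm0 : m ≠ 0 := by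
    rintro rfl
    rw [map_zero, inner_zero_left, add_zero] at hQ
    have hp0 : p = 0 := by
      by_contra hp0
      exact (hD.re_inner_pos p hp hp0).ne' (by rw [hQ, Complex.zero_re])
    exact hu₀0 (by simp [← hy, hp0])
  have hmpos : 0 < ‖m‖ := norm_pos_iff.2 hm0
  have hre : ‖m‖ ^ 2 + γ * (⟪G m, m⟫_ℂ).re = 0 := by
    rw [← re_inner_add_smul_apply_self, hmγ, inner_zero_left, Complex.zero_re]
  have hγpos : 0 < γ := by nlinarith [hD.re_inner_neg m hm hm0]
  have hκγ : κ ≤ γ := by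
    have : ‖m‖ ≤ γ * (κ⁻¹ * ‖m‖) := calc
      ‖m‖ = ‖(γ : ℂ) • G m‖ := by rw [← norm_neg, neg_eq_of_add_eq_zero_right hmγ]
      _ = γ * ‖G m‖ := by rw [norm_smul, Complex.norm_real, Real.norm_of_nonneg hγpos.le]
      _ ≤ γ * (κ⁻¹ * ‖m‖) := by gcongr; exact G.le_of_opNorm_le hG m
    rw [← mul_assoc, le_mul_iff_one_le_left hmpos, ← div_eq_mul_inv, one_le_div hκ] at this
    exact this
  obtain rfl : γ = κ := le_antisymm hγ hκγ
  exact (Submodule.ne_bot_iff _).2 ⟨m, by simpa using hmγ, hm0⟩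

end IsCanonicalDecomposition

end

/-- Proposition 4.8: with the canonical decomposition `H = H₊ ⊕ H₋ ⊕ N(G)` of a
selfadjoint operator `G` (positive definite on `H₊`, negative definite on `H₋`, with
`‖G₊‖ = ‖G₋‖ = 1/κ`), the normal equation `(I + γG)y₀ = u₀` has a solution `y₀ ∈ Q(G)`
with `γ ∈ [-κ, κ]` for every `u₀ ∈ H` iff `ker(I - κG) ≠ {0}` and `ker(I + κG) ≠ {0}`. -/
theorem solvable_for_all_iff_boundary_kernels
    {H : Type*} [NormedAddCommGroup H] [InnerProductSpace ℂ H] [CompleteSpace H]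
    (G : H →L[ℂ] H) (hG : IsSelfAdjoint G) (κ : ℝ) (hκ : 0 < κ)
    (Hp Hm : Submodule ℂ H)
    (hpm : ∀ x ∈ Hp, ∀ y ∈ Hm, ⟪x, y⟫_ℂ = 0)
    (hp0 : ∀ x ∈ Hp, ∀ y ∈ LinearMap.ker (G : H →ₗ[ℂ] H), ⟪x, y⟫_ℂ = 0)
    (hm0 : ∀ x ∈ Hm, ∀ y ∈ LinearMap.ker (G : H →ₗ[ℂ] H), ⟪x, y⟫_ℂ = 0)
    (hspan : ∀ x : H, ∃ xp ∈ Hp, ∃ xm ∈ Hm, ∃ x0 ∈ LinearMap.ker (G : H →ₗ[ℂ] H), x = xp + xm + x0)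
    (hinvp : ∀ x ∈ Hp, G x ∈ Hp) (hinvm : ∀ x ∈ Hm, G x ∈ Hm)
    (hposp : ∃ α > 0, ∀ x ∈ Hp, α * ‖x‖ ^ 2 ≤ (⟪G x, x⟫_ℂ).re)
    (hnegm : ∃ β > 0, ∀ x ∈ Hm, (⟪G x, x⟫_ℂ).re ≤ -(β * ‖x‖ ^ 2))
    (hnormp : IsLUB {r : ℝ | ∃ x ∈ Hp, ‖x‖ = 1 ∧ r = ‖G x‖} (1 / κ))
    (hnormm : IsLUB {r : ℝ | ∃ x ∈ Hm, ‖x‖ = 1 ∧ r = ‖G x‖} (1 / κ)) :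
    (∀ u₀ : H, ∃ γ ∈ Set.Icc (-κ) κ, ∃ y₀ : H,
        ⟪G y₀, y₀⟫_ℂ = 0 ∧ ((1 : H →L[ℂ] H) + (γ : ℂ) • G) y₀ = u₀) ↔
      (LinearMap.ker (((1 : H →L[ℂ] H) - (κ : ℂ) • G : H →L[ℂ] H) : H →ₗ[ℂ] H) ≠ ⊥ ∧
        LinearMap.ker (((1 : H →L[ℂ] H) + (κ : ℂ) • G : H →L[ℂ] H) : H →ₗ[ℂ] H) ≠ ⊥) := by
  obtain ⟨α, hα, hposp⟩ := hposp
  obtain ⟨β, hβ, hnegm⟩ := hnegm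
  have hD : IsCanonicalDecomposition G Hp Hm :=
    { isOrtho := Submodule.isOrtho_iff_inner_eq.2 hpm
      isOrtho_ker_left := Submodule.isOrtho_iff_inner_eq.2 hp0
      isOrtho_ker_right := Submodule.isOrtho_iff_inner_eq.2 hm0
      exists_eq_add_add := hspan
      mapsTo_left := hinvp
      mapsTo_right := hinvm
      re_inner_pos := fun x hx hx0 => (by positivity : 0 < α * ‖x‖ ^ 2).trans_le (hposp x hx)
      re_inner_neg := fun x hx hx0 =>
        (hnegm x hx).trans_lt (neg_neg_iff_pos.2 (by positivity)) }
  rw [one_div] at hnormp hnormm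
  have hGκ : ‖G‖ ≤ κ⁻¹ := hD.opNorm_le (by positivity)
    (fun _ hx => norm_apply_le_of_isLUB hnormp hx) (fun _ hx => norm_apply_le_of_isLUB hnormm hx)
  refine ⟨fun hsolv => ⟨?_, ?_⟩, fun ⟨hker_sub, hker_add⟩ =>
    hG.exists_isotropic_solution hκ hGκ hker_sub hker_add⟩
  · obtain ⟨_, u, hu, hu1, -⟩ := hnormm.nonempty
    obtain ⟨γ, hγ, y, hy0, hy⟩ := hsolv u
    have := hD.neg.ker_one_add_smul_ne_bot hκ (by rwa [norm_neg]) hu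
      (norm_ne_zero_iff.1 (hu1 ▸ one_ne_zero)) (γ := -γ) (by linarith [hγ.1]) (by simpa using hy0)
      (by simpa using hy)
    rwa [smul_neg, ← sub_eq_add_neg] at this
  · obtain ⟨_, u, hu, hu1, -⟩ := hnormp.nonempty
    obtain ⟨γ, hγ, y, hy0, hy⟩ := hsolv u
    exact hD.ker_one_add_smul_ne_bot hκ hGκ hu (norm_ne_zero_iff.1 (hu1 ▸ one_ne_zero)) hγ.2 hy0 hy
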